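/- arXiv:math/0501419 — 8 statements merged into one kernel-verified Lean document; each statement's English description precedes it below -/
import Mathlib

section
/- Let L be a simple lattice with at least three elements. If L satisfies the join-semidistributive law (x ∨ z = y ∨ z implies x ∨ z = (x ∧ y) ∨ z), then L does not have a largest element. -/
/-- A lattice congruence: an equivalence relation compatible with join and meet. -/
def IsLatticeCon {α : Type*} [Lattice α] (r : α → α → Prop) : Prop :=
  Equivalence r ∧ (∀ a b c d : α, r a b → r c d → r (a ⊔ c) (b ⊔ d)) ∧
    (∀ a b c d : α, r a b → r c d → r (a ⊓ c) (b ⊓ d))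

/-- A simple join-semidistributive lattice with at least three elements has no largest
element. -/
theorem stmt0 {α : Type*} [Lattice α]
    (hsimple : ∀ r : α → α → Prop, IsLatticeCon r →
      (∀ a b : α, r a b ↔ a = b) ∨ (∀ a b : α, r a b))
    (hthree : ∃ a b c : α, a ≠ b ∧ a ≠ c ∧ b ≠ c)
    (hsd : ∀ x y z : α, x ⊔ z = y ⊔ z → x ⊔ z = (x ⊓ y) ⊔ z) :
    ¬ ∃ t : α, ∀ x : α, x ≤ t := by
  rintro ⟨t, ht⟩
  -- For each u, the relation R u is a lattice congruence.
  have key : ∀ u : α,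
      IsLatticeCon (fun x y => ∀ z : α, (x ⊔ z) ⊔ u = t ↔ (y ⊔ z) ⊔ u = t) := by
    intro u
    set R : α → α → Prop := fun x y => ∀ z : α, (x ⊔ z) ⊔ u = t ↔ (y ⊔ z) ⊔ u = t with hR
    have hequiv : Equivalence R :=
      ⟨fun x z => Iff.rfl, fun h z => (h z).symm, fun h1 h2 z => (h1 z).trans (h2 z)⟩
    -- one-sided meet compatibility, using join-semidistributivity
    have aux : ∀ x y : α, R x y → ∀ c z : α,
        ((x ⊓ c) ⊔ z) ⊔ u = t → ((y ⊓ c) ⊔ z) ⊔ u = t := by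
      intro x y h c z h1
      have h1' : (x ⊓ c) ⊔ (z ⊔ u) = t := by rw [← sup_assoc]; exact h1
      have hx : x ⊔ (z ⊔ u) = t :=
        le_antisymm (ht _) (h1' ▸ sup_le_sup_right inf_le_left _)
      have hc : c ⊔ (z ⊔ u) = t :=
        le_antisymm (ht _) (h1' ▸ sup_le_sup_right inf_le_right _)
      have hy : y ⊔ (z ⊔ u) = t := by
        have := (h z).mp (by rw [sup_assoc]; exact hx)
        rw [← sup_assoc]; exact this
      have h2 := hsd y c (z ⊔ u) (hy.trans hc.symm)
      rw [sup_assoc, ← h2]; exact hy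
    have hmeet1 : ∀ x y : α, R x y → ∀ c : α, R (x ⊓ c) (y ⊓ c) := by
      intro x y h c z
      exact ⟨aux x y h c z, aux y x (hequiv.symm h) c z⟩
    have hjoin1 : ∀ x y : α, R x y → ∀ c : α, R (x ⊔ c) (y ⊔ c) := by
      intro x y h c z
      rw [sup_assoc x c z, sup_assoc y c z]
      exact h (c ⊔ z)
    refine ⟨hequiv, ?_, ?_⟩
    · intro a b c d hab hcd
      refine hequiv.trans (hjoin1 a b hab c) ?_
      have := hjoin1 c d hcd b
      rw [sup_comm c b, sup_comm d b] at this
      exact this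
    · intro a b c d hab hcd
      refine hequiv.trans (hmeet1 a b hab c) ?_
      have := hmeet1 c d hcd b
      rw [inf_comm c b, inf_comm d b] at this
      exact this
  -- get two distinct elements different from t
  obtain ⟨a, b, c, hab, hac, hbc⟩ := hthree
  obtain ⟨p, q, hpq, hpt, hqt⟩ : ∃ p q : α, p ≠ q ∧ p ≠ t ∧ q ≠ t := by
    by_cases hat : a = t
    · exact ⟨b, c, hbc, fun h => hab (hat.trans h.symm), fun h => hac (hat.trans h.symm)⟩
    by_cases hbt : b = t
    · exact ⟨a, c, hac, hat, fun h => hbc (hbt.trans h.symm)⟩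
    · exact ⟨a, b, hab, hat, hbt⟩
  by_cases hred : ∃ u v : α, u ≠ t ∧ v ≠ t ∧ u ⊔ v = t
  · -- t is join-reducible
    obtain ⟨u, v, hu, hv, huv⟩ := hred
    rcases hsimple _ (key u) with hDel | hAll
    · -- R u relates u ⊓ v and u, so u ⊓ v = u, so u ≤ v, so v = t: contradiction
      have hRuv : ∀ z : α, ((u ⊓ v) ⊔ z) ⊔ u = t ↔ (u ⊔ z) ⊔ u = t := by
        intro z
        have e1 : ((u ⊓ v) ⊔ z) ⊔ u = z ⊔ u := by
          rw [sup_assoc]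
          exact sup_eq_right.mpr (le_trans inf_le_left le_sup_right)
        have e2 : (u ⊔ z) ⊔ u = z ⊔ u := by
          rw [sup_assoc]
          exact sup_eq_right.mpr le_sup_right
        rw [e1, e2]
      have : u ⊓ v = u := (hDel (u ⊓ v) u).mp hRuv
      have huv' : u ≤ v := inf_eq_left.mp this
      exact hv (by rw [← huv, sup_eq_right.mpr huv'])
    · -- R u relates t and u : contradiction at z = u
      have := (hAll t u) u
      have hl : (t ⊔ u) ⊔ u = t := by rw [sup_eq_left.mpr (ht u), sup_eq_left.mpr (ht u)]
      have : (u ⊔ u) ⊔ u = t := this.mp hl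
      rw [sup_idem, sup_idem] at this
      exact hu this
  · -- t is join-irreducible
    push_neg at hred
    rcases hsimple _ (key p) with hDel | hAll
    · -- any two non-top elements are R p related
      have claim : ∀ x : α, x ≠ t → ∀ z : α, ((x ⊔ z) ⊔ p = t ↔ z = t) := by
        intro x hx z
        constructor
        · intro h
          by_contra hz
          by_cases hxz : x ⊔ z = t
          · exact hz (by
              by_contra hz'
              exact (hred x z hx hz') hxz)
          · exact (hred (x ⊔ z) p hxz hpt) h
        · intro h
          subst h
          rw [sup_eq_right.mpr (ht x), sup_eq_left.mpr (ht p)]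
      have hRpq : ∀ z : α, (p ⊔ z) ⊔ p = t ↔ (q ⊔ z) ⊔ p = t := fun z =>
        (claim p hpt z).trans (claim q hqt z).symm
      exact hpq ((hDel p q).mp hRpq)
    · -- R p relates t and p : contradiction at z = p
      have := (hAll t p) p
      have hl : (t ⊔ p) ⊔ p = t := by rw [sup_eq_left.mpr (ht p), sup_eq_left.mpr (ht p)]
      have : (p ⊔ p) ⊔ p = t := this.mp hl
      rw [sup_idem, sup_idem] at this
      exact hpt this
end

section
/- Let L be a join-semidistributive lattice with a largest element 1, and let I be a maximal (proper) ideal of L. Then I is a prime ideal: if x ∉ I and y ∉ I, then x ∧ y ∉ I. -/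
lemma aux_top {α : Type*} [Lattice α] [OrderTop α]
    (I : Order.Ideal α) (hI : I.IsMaximal) {x : α} (hx : x ∉ I) :
    ∃ a ∈ I, a ⊔ x = ⊤ := by
  have hlt : I < I ⊔ Order.Ideal.principal x := by
    refine lt_of_le_of_ne le_sup_left ?_
    intro h
    exact hx (h ▸ le_sup_right (a := I) (Order.Ideal.mem_principal.2 le_rfl))
  have huniv := hI.maximal_proper hlt
  have : (⊤ : α) ∈ ((I ⊔ Order.Ideal.principal x : Order.Ideal α) : Set α) :=
    huniv ▸ Set.mem_univ _
  obtain ⟨a, ha, j, hj, hle⟩ := Order.Ideal.mem_sup.1 this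
  refine ⟨a, ha, le_antisymm le_top ?_⟩
  exact hle.trans (sup_le_sup_left (Order.Ideal.mem_principal.1 hj) a)

/-- In a join-semidistributive lattice with a largest element, every maximal proper ideal
is prime. -/
theorem stmt1 {α : Type*} [Lattice α] [OrderTop α]
    (hsd : ∀ x y z : α, x ⊔ z = y ⊔ z → x ⊔ z = (x ⊓ y) ⊔ z)
    (I : Order.Ideal α) (hI : I.IsMaximal)
    {x y : α} (hx : x ∉ I) (hy : y ∉ I) : x ⊓ y ∉ I := by
  obtain ⟨a, ha, hax⟩ := aux_top I hI hx
  obtain ⟨b, hb, hby⟩ := aux_top I hI hy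
  set c := a ⊔ b with hc
  have hcI : c ∈ I := I.sup_mem ha hb
  have hxc : x ⊔ c = ⊤ := le_antisymm le_top
    (hax ▸ sup_le (le_sup_of_le_right le_sup_left) le_sup_left)
  have hyc : y ⊔ c = ⊤ := le_antisymm le_top
    (hby ▸ sup_le (le_sup_of_le_right le_sup_right) le_sup_left)
  have := hsd x y c (hxc.trans hyc.symm)
  intro hmem
  have : (⊤ : α) ∈ I := by
    rw [← hxc, this]; exact I.sup_mem hmem hcI
  exact hI.toIsProper.ne_top (Order.Ideal.top_of_top_mem this ▸ rfl)
end

section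
/- Let A be a finite lattice and let p, q ∈ J(A) be join-irreducible elements. Then p D q (i.e., p ≠ q and there exists x ∈ A with p ≤ q ∨ x and p ≰ q⁎ ∨ x, where q⁎ is the unique lower cover of q) if and only if there exists a minimal pair ⟨p, I⟩ of A with q ∈ I. -/
/-! If `p D q` is witnessed by `x`, write `x` as a join of a finite set `X` of join-irreducibles:
`{q} ∪ X` is a join cover of `p` that refines to a minimal one `I`. To find `I`, minimise the
lower closure among the join covers refining `{q} ∪ X` and keep the maximal elements. Every
element of `I` lies below `q` or below `x`, and those strictly below `q` lie below `q⁎`, so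
`p ≰ q⁎ ∨ x` forces `q ∈ I`.

Conversely, for a minimal pair `⟨p, I⟩` with `q ∈ I` the witness is `x = ⋁ (I ∖ {q})`: if
`p ≤ q⁎ ∨ x`, replacing `q` in `I` by join-irreducibles with join `q⁎` would give a smaller
join cover of `p` that omits `q`. -/

/-- A minimal pair `⟨p, I⟩` in a join-semilattice. -/
def MinimalPair {α : Type*} [SemilatticeSup α] (p : α) (I : Finset α) : Prop :=
  SupIrred p ∧ (∀ i ∈ I, SupIrred i) ∧ p ∉ I ∧
    (∃ hI : I.Nonempty, p ≤ I.sup' hI id) ∧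
    ∀ J : Finset α, (∀ j ∈ J, SupIrred j) → (∀ j ∈ J, ∃ i ∈ I, j ≤ i) →
      ∀ hJ : J.Nonempty, p ≤ J.sup' hJ id → I ⊆ J

open Finset

lemma lowerClosure_le_lowerClosure_iff {α : Type*} [Preorder α] {s t : Set α} :
    lowerClosure s ≤ lowerClosure t ↔ ∀ a ∈ s, ∃ b ∈ t, a ≤ b := by
  simp [lowerClosure_le, Set.subset_def]

section

variable {α : Type*} [SemilatticeSup α] [OrderBot α]

lemma Finset.sup_id_eq_sup_erase [DecidableEq α] {s : Finset α} {a : α} (ha : a ∈ s) :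
    s.sup id = a ⊔ (s.erase a).sup id := by
  conv_lhs => rw [← insert_erase ha]
  exact sup_insert

lemma exists_le_sup'_iff_le_sup {p : α} (hp : p ≠ ⊥) {s : Finset α} :
    (∃ hs : s.Nonempty, p ≤ s.sup' hs id) ↔ p ≤ s.sup id := by
  refine ⟨fun ⟨hs, h⟩ ↦ by rwa [sup'_eq_sup] at h, fun h ↦ ⟨?_, by rwa [sup'_eq_sup]⟩⟩
  rw [nonempty_iff_ne_empty]
  rintro rfl
  exact hp (le_bot_iff.1 h)

lemma minimalPair_iff {p : α} {I : Finset α} :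
    MinimalPair p I ↔ SupIrred p ∧ (∀ i ∈ I, SupIrred i) ∧ p ∉ I ∧ p ≤ I.sup id ∧
      ∀ J : Finset α, (∀ j ∈ J, SupIrred j) → (∀ j ∈ J, ∃ i ∈ I, j ≤ i) → p ≤ J.sup id →
        I ⊆ J := by
  refine and_congr_right fun hp ↦ ?_
  simp only [← exists_imp, exists_le_sup'_iff_le_sup hp.ne_bot]

lemma exists_minimal_join_cover_refining [Finite α] {p : α} {I₀ : Finset α}
    (hI₀ : ∀ i ∈ I₀, SupIrred i) (hpI₀ : p ≤ I₀.sup id) :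
    ∃ I : Finset α, (∀ i ∈ I, SupIrred i) ∧ (∀ i ∈ I, ∃ k ∈ I₀, i ≤ k) ∧ p ≤ I.sup id ∧
      ∀ J : Finset α, (∀ j ∈ J, SupIrred j) → (∀ j ∈ J, ∃ i ∈ I, j ≤ i) → p ≤ J.sup id →
        I ⊆ J := by
  classical
  let covers : Set (Finset α) :=
    {J | (∀ j ∈ J, SupIrred j) ∧ (∀ j ∈ J, ∃ k ∈ I₀, j ≤ k) ∧ p ≤ J.sup id}
  obtain ⟨I, ⟨hIirr, hII₀, hpI⟩, hImin⟩ :=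
    covers.toFinite.exists_minimalFor (fun J : Finset α ↦ lowerClosure (J : Set α)) covers
      ⟨I₀, hI₀, fun k hk ↦ ⟨k, hk, le_rfl⟩, hpI₀⟩
  let M := I.filter (Maximal (· ∈ I))
  have hMI : M ⊆ I := filter_subset _ _
  have hIM : ∀ i ∈ I, ∃ m ∈ M, i ≤ m := fun i hi ↦
    let ⟨m, him, hm⟩ := I.exists_le_maximal hi
    ⟨m, mem_filter.2 ⟨hm.prop, hm⟩, him⟩
  have hMsup : M.sup id = I.sup id :=
    le_antisymm (sup_mono hMI) <| Finset.sup_le fun i hi ↦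
      let ⟨m, hm, him⟩ := hIM i hi
      him.trans (le_sup (f := id) hm)
  refine ⟨M, fun m hm ↦ hIirr m (hMI hm), fun m hm ↦ hII₀ m (hMI hm), hMsup ▸ hpI, ?_⟩
  intro J hJirr hJM hpJ m hm
  have hJI : ∀ j ∈ J, ∃ i ∈ I, j ≤ i := fun j hj ↦
    let ⟨m, hm, hjm⟩ := hJM j hj
    ⟨m, hMI hm, hjm⟩
  have hJcover : J ∈ covers := ⟨hJirr, fun j hj ↦
    let ⟨i, hi, hji⟩ := hJI j hj
    let ⟨k, hk, hik⟩ := hII₀ i hi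
    ⟨k, hk, hji.trans hik⟩, hpJ⟩
  obtain ⟨j, hj, hmj⟩ := lowerClosure_le_lowerClosure_iff.1
    (hImin hJcover (lowerClosure_le_lowerClosure_iff.2 hJI)) m (hMI hm)
  obtain ⟨i, hi, hji⟩ := hJI j hj
  have hmi : m = i := (mem_filter.1 hm).2.eq_of_le hi (hmj.trans hji)
  rwa [le_antisymm hmj (hji.trans hmi.ge)]

lemma exists_minimalPair_of_dependency [Finite α] {p q qs x : α} (hp : SupIrred p)
    (hq : SupIrred q) (hqs : ∀ y, y < q → y ≤ qs) (hpq : p ≠ q) (hpx : p ≤ q ⊔ x)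
    (hpqsx : ¬ p ≤ qs ⊔ x) :
    ∃ I : Finset α, MinimalPair p I ∧ q ∈ I := by
  classical
  obtain ⟨X, hXsup, hXirr⟩ := exists_supIrred_decomposition x
  obtain ⟨I, hIirr, hIqX, hpI, hImin⟩ := exists_minimal_join_cover_refining (p := p)
    (I₀ := insert q X) (forall_mem_insert _ _ _ |>.2 ⟨hq, hXirr⟩)
    (by rwa [sup_insert, hXsup])
  have hqI : q ∈ I := by
    by_contra hqI
    refine hpqsx (hpI.trans (Finset.sup_le fun i hi ↦ ?_))
    obtain ⟨k, hk, hik⟩ := hIqX i hi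
    rcases mem_insert.1 hk with rfl | hkX
    · exact le_sup_of_le_left (hqs i (hik.lt_of_ne (ne_of_mem_of_not_mem hi hqI)))
    · exact le_sup_of_le_right (hik.trans (hXsup ▸ le_sup (f := id) hkX))
  have hpI' : p ∉ I := fun hpI' ↦
    hpq (mem_singleton.1 (hImin {p} (by simpa using hp) (by simpa using ⟨p, hpI', le_rfl⟩)
      (by simp) hqI)).symm
  exact ⟨I, minimalPair_iff.2 ⟨hp, hIirr, hpI', hpI, hImin⟩, hqI⟩

lemma dependency_of_minimalPair [WellFoundedLT α] {p q qs : α} (hqs : qs < q) {I : Finset α}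
    (hI : MinimalPair p I) (hqI : q ∈ I) :
    p ≠ q ∧ ∃ x : α, p ≤ q ⊔ x ∧ ¬ p ≤ qs ⊔ x := by
  classical
  obtain ⟨-, hIirr, hpI, hpIsup, hImin⟩ := minimalPair_iff.1 hI
  rw [sup_id_eq_sup_erase hqI] at hpIsup
  refine ⟨ne_of_mem_of_not_mem hqI hpI |>.symm, (I.erase q).sup id, hpIsup, fun hpJ ↦ ?_⟩
  obtain ⟨S, hSsup, hSirr⟩ := exists_supIrred_decomposition qs
  have hqJ : q ∈ S ∪ I.erase q := by
    refine hImin (S ∪ I.erase q) ?_ ?_ (by rwa [sup_union, hSsup]) hqI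
    · simp only [mem_union, mem_erase]
      rintro j (hj | ⟨-, hj⟩)
      exacts [hSirr hj, hIirr j hj]
    · simp only [mem_union, mem_erase]
      rintro j (hj | ⟨-, hj⟩)
      exacts [⟨q, hqI, hSsup ▸ le_sup (f := id) hj |>.trans hqs.le⟩, ⟨j, hj, le_rfl⟩]
  rcases mem_union.1 hqJ with hqS | hqI'
  · exact hqs.not_ge (hSsup ▸ le_sup (f := id) hqS)
  · exact ne_of_mem_erase hqI' rfl

end

/-- In a finite lattice, for join-irreducibles `p, q` (with `qs` the unique lower cover of
`q`), `p D q` holds iff there is a minimal pair `⟨p, I⟩` with `q ∈ I`. -/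
theorem stmt5 {α : Type*} [Lattice α] [Fintype α] [OrderBot α]
    (p q : α) (hp : SupIrred p) (hq : SupIrred q)
    (qs : α) (hqs : qs ⋖ q) (hqsu : ∀ x : α, x < q → x ≤ qs) :
    (p ≠ q ∧ ∃ x : α, p ≤ q ⊔ x ∧ ¬ p ≤ qs ⊔ x) ↔
      ∃ I : Finset α, MinimalPair p I ∧ q ∈ I :=
  ⟨fun ⟨hpq, _, hpx, hpqsx⟩ ↦ exists_minimalPair_of_dependency hp hq hqsu hpq hpx hpqsx,
    fun ⟨_, hI, hqI⟩ ↦ dependency_of_minimalPair hqs.lt hI hqI⟩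
end

section
/- Let A and B be lattices with zero, let n be a positive integer, a₀,…,a_{n−1} ∈ A, b₀,…,b_{n−1} ∈ B. Then the union ⋃_{i<n} (aᵢ ⊗ bᵢ) is a bi-ideal of A × B if and only if for all i ≠ j < n: (1) aᵢ ∧ aⱼ = 0, or there exists k < n with aᵢ ∧ aⱼ ≤ a_k and bᵢ ∨ bⱼ ≤ b_k; and (2) bᵢ ∧ bⱼ = 0, or there exists k < n with bᵢ ∧ bⱼ ≤ b_k and aᵢ ∨ aⱼ ≤ a_k. -/
/-- `⊥_{A,B} = (A × {0}) ∪ ({0} × B)`. -/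
def botSetProd {α β : Type*} [SemilatticeSup α] [OrderBot α] [SemilatticeSup β] [OrderBot β] :
    Set (α × β) :=
  {p | p.1 = ⊥ ∨ p.2 = ⊥}

/-- A bi-ideal of `A × B`: a downward-closed subset containing `⊥_{A,B}` and closed under
lateral joins. -/
def IsBiIdeal {α β : Type*} [SemilatticeSup α] [OrderBot α] [SemilatticeSup β] [OrderBot β]
    (I : Set (α × β)) : Prop :=
  (∀ p ∈ I, ∀ q : α × β, q ≤ p → q ∈ I) ∧
    botSetProd ⊆ I ∧
    (∀ p ∈ I, ∀ q ∈ I, (p : α × β).1 = (q : α × β).1 → (p.1, p.2 ⊔ q.2) ∈ I) ∧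
    (∀ p ∈ I, ∀ q ∈ I, (p : α × β).2 = (q : α × β).2 → (p.1 ⊔ q.1, p.2) ∈ I)

/-- The pure tensor `a ⊗ b = ⊥_{A,B} ∪ { ⟨x,y⟩ : x ≤ a, y ≤ b }`. -/
def pureTensor {α β : Type*} [SemilatticeSup α] [OrderBot α] [SemilatticeSup β] [OrderBot β]
    (a : α) (b : β) : Set (α × β) :=
  botSetProd ∪ {p | p.1 ≤ a ∧ p.2 ≤ b}

lemma mem_botSet {α β : Type*} [SemilatticeSup α] [OrderBot α] [SemilatticeSup β] [OrderBot β]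
    {p : α × β} : p ∈ (botSetProd : Set (α × β)) ↔ p.1 = ⊥ ∨ p.2 = ⊥ := Iff.rfl

lemma mem_pureTensor {α β : Type*} [SemilatticeSup α] [OrderBot α] [SemilatticeSup β]
    [OrderBot β] {p : α × β} {x : α} {y : β} :
    p ∈ pureTensor x y ↔ (p.1 = ⊥ ∨ p.2 = ⊥) ∨ (p.1 ≤ x ∧ p.2 ≤ y) := Iff.rfl

/-- The union `⋃_{i<n} aᵢ ⊗ bᵢ` is a bi-ideal of `A × B` iff for all `i ≠ j`:
(1) `aᵢ ⊓ aⱼ = ⊥` or some `k` has `aᵢ ⊓ aⱼ ≤ a_k` and `bᵢ ⊔ bⱼ ≤ b_k`; and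
(2) `bᵢ ⊓ bⱼ = ⊥` or some `k` has `bᵢ ⊓ bⱼ ≤ b_k` and `aᵢ ⊔ aⱼ ≤ a_k`. -/
theorem stmt6 {α β : Type*} [Lattice α] [OrderBot α] [Lattice β] [OrderBot β]
    (n : ℕ) (hn : 0 < n) (a : Fin n → α) (b : Fin n → β) :
    IsBiIdeal (⋃ i, pureTensor (a i) (b i)) ↔
      ∀ i j : Fin n, i ≠ j →
        (a i ⊓ a j = ⊥ ∨ ∃ k, a i ⊓ a j ≤ a k ∧ b i ⊔ b j ≤ b k) ∧
        (b i ⊓ b j = ⊥ ∨ ∃ k, b i ⊓ b j ≤ b k ∧ a i ⊔ a j ≤ a k) := by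
  constructor
  · rintro ⟨-, -, hL, hR⟩ i j hij
    constructor
    · -- use p = (a i ⊓ a j, b i), q = (a i ⊓ a j, b j)
      have hp : ((a i ⊓ a j, b i) : α × β) ∈ ⋃ k, pureTensor (a k) (b k) :=
        Set.mem_iUnion.2 ⟨i, Or.inr ⟨inf_le_left, le_rfl⟩⟩
      have hq : ((a i ⊓ a j, b j) : α × β) ∈ ⋃ k, pureTensor (a k) (b k) :=
        Set.mem_iUnion.2 ⟨j, Or.inr ⟨inf_le_right, le_rfl⟩⟩
      have := hL _ hp _ hq rfl
      obtain ⟨k, hk⟩ := Set.mem_iUnion.1 this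
      rcases hk with (h | h) | ⟨h1, h2⟩
      · exact Or.inl h
      · simp only at h
        exact Or.inr ⟨i, inf_le_left, by rw [h]; exact bot_le⟩
      · exact Or.inr ⟨k, h1, h2⟩
    · have hp : ((a i, b i ⊓ b j) : α × β) ∈ ⋃ k, pureTensor (a k) (b k) :=
        Set.mem_iUnion.2 ⟨i, Or.inr ⟨le_rfl, inf_le_left⟩⟩
      have hq : ((a j, b i ⊓ b j) : α × β) ∈ ⋃ k, pureTensor (a k) (b k) :=
        Set.mem_iUnion.2 ⟨j, Or.inr ⟨le_rfl, inf_le_right⟩⟩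
      have := hR _ hp _ hq rfl
      obtain ⟨k, hk⟩ := Set.mem_iUnion.1 this
      rcases hk with (h | h) | ⟨h1, h2⟩
      · simp only at h
        exact Or.inr ⟨i, inf_le_left, by rw [h]; exact bot_le⟩
      · exact Or.inl h
      · exact Or.inr ⟨k, h2, h1⟩
  · intro H
    refine ⟨?_, ?_, ?_, ?_⟩
    · rintro p hp q hq
      obtain ⟨i, hi⟩ := Set.mem_iUnion.1 hp
      refine Set.mem_iUnion.2 ⟨i, ?_⟩
      rcases hi with (h | h) | ⟨h1, h2⟩
      · exact Or.inl (Or.inl (le_bot_iff.1 (h ▸ hq.1)))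
      · exact Or.inl (Or.inr (le_bot_iff.1 (h ▸ hq.2)))
      · exact Or.inr ⟨hq.1.trans h1, hq.2.trans h2⟩
    · intro p hp
      exact Set.mem_iUnion.2 ⟨⟨0, hn⟩, Or.inl hp⟩
    · rintro p hp q hq hpq
      obtain ⟨i, hi⟩ := Set.mem_iUnion.1 hp
      obtain ⟨j, hj⟩ := Set.mem_iUnion.1 hq
      rcases hi with (h | h) | ⟨hi1, hi2⟩
      · exact Set.mem_iUnion.2 ⟨i, Or.inl (Or.inl h)⟩
      · -- p.2 = ⊥, so join is q
        have : (p.1, p.2 ⊔ q.2) = (q.1, q.2) := by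
          rw [hpq, h, bot_sup_eq]
        rw [this]
        exact Set.mem_iUnion.2 ⟨j, hj⟩
      rcases hj with (h | h) | ⟨hj1, hj2⟩
      · exact Set.mem_iUnion.2 ⟨i, Or.inl (Or.inl (hpq ▸ h))⟩
      · have : (p.1, p.2 ⊔ q.2) = (p.1, p.2) := by rw [h, sup_bot_eq]
        rw [this]
        exact Set.mem_iUnion.2 ⟨i, Or.inr ⟨hi1, hi2⟩⟩
      · by_cases hij : i = j
        · subst hij
          exact Set.mem_iUnion.2 ⟨i, Or.inr ⟨hi1, sup_le hi2 hj2⟩⟩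
        · have hinf : p.1 ≤ a i ⊓ a j := le_inf hi1 (hpq ▸ hj1)
          rcases (H i j hij).1 with h | ⟨k, hk1, hk2⟩
          · exact Set.mem_iUnion.2 ⟨i, Or.inl (Or.inl (le_bot_iff.1 (h ▸ hinf)))⟩
          · exact Set.mem_iUnion.2 ⟨k, Or.inr ⟨hinf.trans hk1, (sup_le_sup hi2 hj2).trans hk2⟩⟩
    · rintro p hp q hq hpq
      obtain ⟨i, hi⟩ := Set.mem_iUnion.1 hp
      obtain ⟨j, hj⟩ := Set.mem_iUnion.1 hq
      rcases hi with (h | h) | ⟨hi1, hi2⟩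
      · have : (p.1 ⊔ q.1, p.2) = (q.1, q.2) := by
          rw [hpq, h, bot_sup_eq]
        rw [this]
        exact Set.mem_iUnion.2 ⟨j, hj⟩
      · exact Set.mem_iUnion.2 ⟨i, Or.inl (Or.inr h)⟩
      rcases hj with (h | h) | ⟨hj1, hj2⟩
      · have : (p.1 ⊔ q.1, p.2) = (p.1, p.2) := by rw [h, sup_bot_eq]
        rw [this]
        exact Set.mem_iUnion.2 ⟨i, Or.inr ⟨hi1, hi2⟩⟩
      · exact Set.mem_iUnion.2 ⟨i, Or.inl (Or.inr (hpq ▸ h))⟩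
      · by_cases hij : i = j
        · subst hij
          exact Set.mem_iUnion.2 ⟨i, Or.inr ⟨sup_le hi1 hj1, hi2⟩⟩
        · have hinf : p.2 ≤ b i ⊓ b j := le_inf hi2 (hpq ▸ hj2)
          rcases (H i j hij).2 with h | ⟨k, hk1, hk2⟩
          · exact Set.mem_iUnion.2 ⟨i, Or.inl (Or.inr (le_bot_iff.1 (h ▸ hinf)))⟩
          · exact Set.mem_iUnion.2 ⟨k, Or.inr ⟨(sup_le_sup hi1 hj1).trans hk2, hinf.trans hk1⟩⟩
end

section
/- Let A be a lattice with zero, and let U be a member of the ideal Int⁎A of the Boolean algebra generated by the sets (a] ∩ (A∖{0}) (a ∈ A∖{0}) inside the power set of A∖{0}, consisting of those members contained in some (a] ∩ (A∖{0}). Then: (1) every element of U lies below some maximal element of U, and (2) the set Max U of maximal elements of U is finite. -/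
/-!
A member of `Int A` is cut out by finitely many principal ideals `(g]`, `g ∈ G`: membership of `x`
depends only on which `g ∈ G` lie above `x`. If `U ∈ Int⁎A` lies below `c`, then every `x ∈ U` lies
below the meet of `c` with all `g ∈ G` above `x`; this meet lies above the same `g ∈ G` as `x`, hence
is again in `U`. There are only finitely many such meets, so `U` has a finite cofinal subset, and
both claims follow from that.
-/

/-- Membership in `Int A`, the Boolean subalgebra of the power set of `A∖{0}` generated by
the truncated principal ideals `(a]• = {x ∈ A∖{0} : x ≤ a}`, for `a ∈ A∖{0}`. -/
inductive MemInt {α : Type*} [Lattice α] [OrderBot α] : Set {a : α // a ≠ ⊥} → Prop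
  | principal (a : α) (ha : a ≠ ⊥) : MemInt {x | x.1 ≤ a}
  | univ : MemInt Set.univ
  | compl {s} : MemInt s → MemInt sᶜ
  | union {s t} : MemInt s → MemInt t → MemInt (s ∪ t)

/-- Membership in `Int⁎A`, the ideal of `Int A` of members contained in some `(a]•`. -/
def MemIntStar {α : Type*} [Lattice α] [OrderBot α] (s : Set {a : α // a ≠ ⊥}) : Prop :=
  MemInt s ∧ ∃ a : α, ∀ x ∈ s, (x : {a : α // a ≠ ⊥}).1 ≤ a

section Cofinal

variable {β : Type*} {S U : Set β} {m : β}

lemma maximal_mem_of_cofinal [Preorder β] (hcof : ∀ x ∈ U, ∃ s ∈ S, x ≤ s)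
    (hSU : S ⊆ U) (hm : Maximal (· ∈ S) m) : Maximal (· ∈ U) m := by
  refine ⟨hSU hm.prop, fun y hy hmy => ?_⟩
  obtain ⟨s, hs, hys⟩ := hcof y hy
  exact hys.trans (hm.2 hs (hmy.trans hys))

lemma Maximal.mem_of_cofinal [PartialOrder β] (hm : Maximal (· ∈ U) m)
    (hcof : ∀ x ∈ U, ∃ s ∈ S, x ≤ s) (hSU : S ⊆ U) : m ∈ S := by
  obtain ⟨s, hs, hms⟩ := hcof m hm.prop
  rwa [hm.eq_of_ge (hSU hs) hms] at hs

lemma Set.Finite.exists_le_maximal_of_cofinal [Preorder β] (hS : S.Finite)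
    (hcof : ∀ x ∈ U, ∃ s ∈ S, x ≤ s) (hSU : S ⊆ U) {x : β} (hx : x ∈ U) :
    ∃ m, x ≤ m ∧ Maximal (· ∈ U) m := by
  obtain ⟨s, hs, hxs⟩ := hcof x hx
  obtain ⟨m, hsm, hm⟩ := hS.exists_le_maximal hs
  exact ⟨m, hxs.trans hsm, maximal_mem_of_cofinal hcof hSU hm⟩

lemma Set.Finite.setOf_maximal_of_cofinal [PartialOrder β] (hS : S.Finite)
    (hcof : ∀ x ∈ U, ∃ s ∈ S, x ≤ s) (hSU : S ⊆ U) : {m | Maximal (· ∈ U) m}.Finite :=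
  hS.subset fun _ hm => Maximal.mem_of_cofinal hm hcof hSU

lemma maximal_mem_iff_forall_eq [PartialOrder β] :
    Maximal (· ∈ U) m ↔ m ∈ U ∧ ∀ y ∈ U, m ≤ y → y = m := by
  simp only [maximal_iff, eq_comm (a := m)]

end Cofinal

lemma exists_subset_inf'_insert_le_iff {α : Type*} [SemilatticeInf α] [DecidableEq α]
    (G : Finset α) {a c : α} (hac : a ≤ c) :
    ∃ H ⊆ G, a ≤ (insert c H).inf' (Finset.insert_nonempty c H) id ∧
      ∀ g ∈ G, ((insert c H).inf' (Finset.insert_nonempty c H) id ≤ g ↔ a ≤ g) := by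
  classical
  have hle : a ≤ (insert c (G.filter (a ≤ ·))).inf' (Finset.insert_nonempty _ _) id := by
    refine Finset.le_inf' _ _ fun b hb => ?_
    rcases Finset.mem_insert.1 hb with rfl | hb
    · exact hac
    · exact (Finset.mem_filter.1 hb).2
  refine ⟨G.filter (a ≤ ·), Finset.filter_subset _ _, hle, fun g hg => ⟨hle.trans, fun hag => ?_⟩⟩
  exact Finset.inf'_le id (Finset.mem_insert_of_mem (Finset.mem_filter.2 ⟨hg, hag⟩))

section Saturated

variable {α : Type*}

def IsSaturated [LE α] [Bot α] (G : Finset α) (s : Set {a : α // a ≠ ⊥}) : Prop :=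
  ∀ ⦃x y : {a : α // a ≠ ⊥}⦄, (∀ g ∈ G, x.1 ≤ g ↔ y.1 ≤ g) → x ∈ s → y ∈ s

namespace IsSaturated

variable [LE α] [Bot α] {G G' : Finset α} {s t : Set {a : α // a ≠ ⊥}}

lemma mono (hs : IsSaturated G s) (hGG' : G ⊆ G') : IsSaturated G' s :=
  fun _ _ hxy => hs fun g hg => hxy g (hGG' hg)

lemma compl (hs : IsSaturated G s) : IsSaturated G sᶜ :=
  fun _ _ hxy hx hy => hx (hs (fun g hg => (hxy g hg).symm) hy)

lemma union [DecidableEq α] (hs : IsSaturated G s) (ht : IsSaturated G' t) :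
    IsSaturated (G ∪ G') (s ∪ t) :=
  fun _ _ hxy => Or.imp ((hs.mono Finset.subset_union_left) hxy)
    ((ht.mono Finset.subset_union_right) hxy)

end IsSaturated

lemma isSaturated_setOf_le [LE α] [Bot α] (a : α) :
    IsSaturated {a} {x : {a : α // a ≠ ⊥} | x.1 ≤ a} :=
  fun _ _ hxy => (hxy a (Finset.mem_singleton_self a)).1

lemma MemInt.exists_isSaturated [Lattice α] [OrderBot α] {s : Set {a : α // a ≠ ⊥}}
    (hs : MemInt s) : ∃ G : Finset α, IsSaturated G s := by
  classical
  induction hs with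
  | principal a _ => exact ⟨{a}, isSaturated_setOf_le a⟩
  | univ => exact ⟨∅, fun _ y _ _ => Set.mem_univ y⟩
  | compl _ ih => exact ih.imp fun _ => IsSaturated.compl
  | union _ _ ihs iht =>
    obtain ⟨G, hG⟩ := ihs
    obtain ⟨G', hG'⟩ := iht
    exact ⟨G ∪ G', hG.union hG'⟩

lemma IsSaturated.exists_finite_cofinal [SemilatticeInf α] [OrderBot α] {G : Finset α}
    {s : Set {a : α // a ≠ ⊥}} (hs : IsSaturated G s) {c : α} (hc : ∀ x ∈ s, x.1 ≤ c) :
    ∃ S ⊆ s, S.Finite ∧ ∀ x ∈ s, ∃ y ∈ S, x ≤ y := by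
  classical
  set meet : Finset α → α := fun H => (insert c H).inf' (Finset.insert_nonempty c H) id
  refine ⟨s ∩ Subtype.val ⁻¹' (meet '' G.powerset), Set.inter_subset_left,
    ((G.powerset.finite_toSet.image meet).preimage Subtype.val_injective.injOn).inter_of_right s,
    fun x hx => ?_⟩
  obtain ⟨H, hHG, hxH, hH⟩ := exists_subset_inf'_insert_le_iff G (hc x hx)
  have hne : meet H ≠ ⊥ := ne_bot_of_le_ne_bot x.2 hxH
  refine ⟨⟨meet H, hne⟩, ⟨hs (fun g hg => (hH g hg).symm) hx, H, Finset.mem_powerset.2 hHG, rfl⟩,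
    hxH⟩

end Saturated

/-- If `U ∈ Int⁎A`, then every element of `U` lies below some maximal element of `U`,
and the set of maximal elements of `U` is finite. -/
theorem stmt11 {α : Type*} [Lattice α] [OrderBot α]
    (U : Set {a : α // a ≠ ⊥}) (hU : MemIntStar U) :
    (∀ x ∈ U, ∃ m ∈ U, x ≤ m ∧ ∀ y ∈ U, m ≤ y → y = m) ∧
      Set.Finite {m | m ∈ U ∧ ∀ y ∈ U, m ≤ y → y = m} := by
  obtain ⟨hInt, c, hc⟩ := hU
  obtain ⟨G, hG⟩ := hInt.exists_isSaturated
  obtain ⟨S, hSU, hS, hcof⟩ := hG.exists_finite_cofinal hc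
  refine ⟨fun x hx => ?_, ?_⟩
  · obtain ⟨m, hxm, hm⟩ := hS.exists_le_maximal_of_cofinal hcof hSU hx
    exact ⟨m, hm.prop, hxm, (maximal_mem_iff_forall_eq.1 hm).2⟩
  · simpa only [maximal_mem_iff_forall_eq] using hS.setOf_maximal_of_cofinal hcof hSU
end

section
/- Let A and B be lattices with zero and let ξ : A∖{0} → B be a map with finite range. Define the one-step adjustment ξ⁽¹⁾(x) = ⋁{ ⋀ ξ[S] : S a nonempty finite subset of A∖{0} with x ≤ ⋁S }. Then ξ⁽¹⁾ is antitone, has finite range, and satisfies ξ ≤ ξ⁽¹⁾ pointwise. -/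
/-- The set of candidate values `⋀ξ[S]`, for `S` a nonempty finite subset of `A∖{0}` with
`x ≤ ⋁S`; the one-step adjustment `ξ⁽¹⁾(x)` is the join (least upper bound) of this set. -/
def adjSet {α β : Type*} [Lattice α] [OrderBot α] [Lattice β] [OrderBot β]
    (ξ : {a : α // a ≠ ⊥} → β) (x : {a : α // a ≠ ⊥}) : Set β :=
  {c | ∃ (S : Finset {a : α // a ≠ ⊥}) (hS : S.Nonempty),
      x.1 ≤ S.sup' hS (fun s => s.1) ∧ c = S.inf' hS ξ}

/-- The one-step adjustment `ξ⁽¹⁾` of a finite-range map `ξ : A∖{0} → B` is antitone, has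
finite range, and dominates `ξ` pointwise. -/
theorem stmt14 {α β : Type*} [Lattice α] [OrderBot α] [Lattice β] [OrderBot β]
    (ξ ξ' : {a : α // a ≠ ⊥} → β) (hfin : (Set.range ξ).Finite)
    (hadj : ∀ x : {a : α // a ≠ ⊥}, IsLUB (adjSet ξ x) (ξ' x)) :
    Antitone ξ' ∧ (Set.range ξ').Finite ∧ ∀ x, ξ x ≤ ξ' x := by
  classical
  refine ⟨?_, ?_, ?_⟩
  · -- Antitone
    intro x y hxy
    refine (hadj y).2 fun c hc => (hadj x).1 ?_
    obtain ⟨S, hS, hle, rfl⟩ := hc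
    exact ⟨S, hS, le_trans hxy hle, rfl⟩
  · -- finite range
    set D : Set β := {c | ∃ (S : Finset {a : α // a ≠ ⊥}) (hS : S.Nonempty),
        c = S.inf' hS ξ} with hDdef
    have hD : D.Finite := by
      have hsub : D ⊆ (fun F : Finset β => if h : F.Nonempty then F.inf' h id else ⊥) ''
          ↑(hfin.toFinset.powerset) := by
        rintro c ⟨S, hS, rfl⟩
        refine ⟨S.image ξ, ?_, ?_⟩
        · simp only [Finset.coe_powerset, Set.mem_preimage, Set.mem_powerset_iff,
            Finset.coe_subset, Finset.mem_coe]
          intro b hb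
          obtain ⟨a, _, rfl⟩ := Finset.mem_image.mp hb
          simp [Set.Finite.mem_toFinset]
        · show (if h : (S.image ξ).Nonempty then (S.image ξ).inf' h id else ⊥) = _
          rw [dif_pos (hS.image ξ), Finset.inf'_image]
          rfl
      exact Set.Finite.subset (Set.Finite.image _ (hfin.toFinset.powerset.finite_toSet)) hsub
    have hTfin : {T : Set β | T ⊆ D}.Finite := hD.finite_subsets
    set h : Set β → β := fun T => if hl : ∃ b, IsLUB T b then hl.choose else ⊥ with hhdef
    have hrange : Set.range ξ' ⊆ h '' {T : Set β | T ⊆ D} := by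
      rintro _ ⟨x, rfl⟩
      refine ⟨adjSet ξ x, ?_, ?_⟩
      · rintro c ⟨S, hS, _, rfl⟩
        exact ⟨S, hS, rfl⟩
      · have hex : ∃ b, IsLUB (adjSet ξ x) b := ⟨ξ' x, hadj x⟩
        rw [hhdef]
        simp only [dif_pos hex]
        exact IsLUB.unique hex.choose_spec (hadj x)
    exact Set.Finite.subset (hTfin.image h) hrange
  · -- ξ ≤ ξ'
    intro x
    refine (hadj x).1 ⟨{x}, Finset.singleton_nonempty x, by simp, by simp⟩
end

section
/- Let A and B be lattices with zero and let ξ : A∖{0} → B be a map with finite range. Then ξ⁽¹⁾ = ξ if and only if ξ is a semilattice homomorphism from ⟨A∖{0}; ∨⟩ to ⟨B; ∧⟩, i.e., ξ(x ∨ y) = ξ(x) ∧ ξ(y) for all x, y ∈ A∖{0}. -/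
/-- The nonzero elements of a join-semilattice with zero form a join-semilattice. -/
instance nzSemilatticeSup {α : Type*} [SemilatticeSup α] [OrderBot α] :
    SemilatticeSup {a : α // a ≠ ⊥} :=
  Subtype.semilatticeSup fun {_ _} hx _ hxy => hx (le_bot_iff.mp (hxy ▸ le_sup_left))

/-!
A map `ξ` with `ξ (x ⊔ y) = ξ x ⊓ ξ y` is antitone and sends `⋁S` to `⋀ξ[S]`, so every candidate
`⋀ξ[S]` with `x ≤ ⋁S` lies below `ξ x = ⋀ξ[{x}]`: `ξ` is its own adjustment. Conversely, if `ξ`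
is the least upper bound of the candidates then `ξ` is antitone (the candidate set shrinks as `x`
grows), giving `ξ (x ⊔ y) ≤ ξ x ⊓ ξ y`, and `ξ x ⊓ ξ y = ⋀ξ[{x, y}]` is a candidate for `x ⊔ y`.
-/

section SupToInf

variable {γ δ : Type*} [SemilatticeSup γ] [SemilatticeInf δ] {f : γ → δ}

theorem antitone_of_map_sup_eq_inf (hf : ∀ x y, f (x ⊔ y) = f x ⊓ f y) : Antitone f :=
  fun x y hxy =>
    calc f y = f (x ⊔ y) := by rw [sup_eq_right.mpr hxy]
      _ = f x ⊓ f y := hf x y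
      _ ≤ f x := inf_le_left

theorem map_finset_sup'_eq_inf' {ι : Type*} (hf : ∀ x y, f (x ⊔ y) = f x ⊓ f y)
    {S : Finset ι} (hS : S.Nonempty) (g : ι → γ) :
    f (S.sup' hS g) = S.inf' hS (f ∘ g) :=
  Finset.apply_sup'_eq_sup'_comp (γ := δᵒᵈ) hS (OrderDual.toDual ∘ f) hf

end SupToInf

section Adjustment

variable {α β : Type*} [Lattice α] [OrderBot α] [Lattice β] [OrderBot β]
  {ξ : {a : α // a ≠ ⊥} → β}

theorem mem_adjSet_self (x : {a : α // a ≠ ⊥}) :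
    ξ x ∈ adjSet ξ x :=
  ⟨{x}, Finset.singleton_nonempty x, by simp, by simp⟩

theorem inf_mem_adjSet_sup (x y : {a : α // a ≠ ⊥}) :
    ξ x ⊓ ξ y ∈ adjSet ξ (x ⊔ y) := by
  classical
  exact ⟨{x, y}, Finset.insert_nonempty x {y}, by simp; exact le_rfl, by simp⟩

theorem adjSet_mono {x y : {a : α // a ≠ ⊥}} (hxy : x ≤ y) : adjSet ξ y ⊆ adjSet ξ x := by
  rintro c ⟨S, hS, hle, rfl⟩
  exact ⟨S, hS, (Subtype.coe_le_coe.mpr hxy).trans hle, rfl⟩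

theorem antitone_of_isLUB_adjSet (hξ : ∀ x, IsLUB (adjSet ξ x) (ξ x)) : Antitone ξ :=
  fun _ _ hxy => (hξ _).2 fun _ hc => (hξ _).1 (adjSet_mono hxy hc)

theorem map_sup_eq_inf_of_isLUB_adjSet (hξ : ∀ x, IsLUB (adjSet ξ x) (ξ x))
    (x y : {a : α // a ≠ ⊥}) : ξ (x ⊔ y) = ξ x ⊓ ξ y :=
  have hanti := antitone_of_isLUB_adjSet hξ
  le_antisymm (le_inf (hanti le_sup_left) (hanti le_sup_right))
    ((hξ _).1 (inf_mem_adjSet_sup x y))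

theorem isLUB_adjSet_of_map_sup_eq_inf (hξ : ∀ x y, ξ (x ⊔ y) = ξ x ⊓ ξ y)
    (x : {a : α // a ≠ ⊥}) : IsLUB (adjSet ξ x) (ξ x) := by
  refine ⟨?_, fun _ hc => hc (mem_adjSet_self x)⟩
  rintro _ ⟨S, hS, hle, rfl⟩
  have hx : x ≤ S.sup' hS id := by
    change x.1 ≤ (S.sup' hS id).1
    rwa [Finset.apply_sup'_eq_sup'_comp hS Subtype.val fun _ _ => rfl]
  calc S.inf' hS ξ = ξ (S.sup' hS id) := (map_finset_sup'_eq_inf' hξ hS id).symm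
    _ ≤ ξ x := antitone_of_map_sup_eq_inf hξ hx

end Adjustment

theorem stmt15_general {α β : Type*} [Lattice α] [OrderBot α] [Lattice β] [OrderBot β]
    (ξ ξ' : {a : α // a ≠ ⊥} → β)
    (hadj : ∀ x : {a : α // a ≠ ⊥}, IsLUB (adjSet ξ x) (ξ' x)) :
    ξ' = ξ ↔ ∀ x y : {a : α // a ≠ ⊥}, ξ (x ⊔ y) = ξ x ⊓ ξ y := by
  constructor
  · rintro rfl
    exact map_sup_eq_inf_of_isLUB_adjSet hadj
  · intro hξ
    funext x
    exact (hadj x).unique (isLUB_adjSet_of_map_sup_eq_inf hξ x)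

/-- For a finite-range map `ξ : A∖{0} → B`, the one-step adjustment `ξ⁽¹⁾` equals `ξ` iff
`ξ` is a semilattice homomorphism from `⟨A∖{0}; ∨⟩` to `⟨B; ∧⟩`. -/
theorem stmt15 {α β : Type*} [Lattice α] [OrderBot α] [Lattice β] [OrderBot β]
    (ξ ξ' : {a : α // a ≠ ⊥} → β) (hfin : (Set.range ξ).Finite)
    (hadj : ∀ x : {a : α // a ≠ ⊥}, IsLUB (adjSet ξ x) (ξ' x)) :
    ξ' = ξ ↔ ∀ x y : {a : α // a ≠ ⊥}, ξ (x ⊔ y) = ξ x ⊓ ξ y :=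
  stmt15_general ξ ξ' hadj
end

section
/- Let A and B be lattices with zero and let ξ : A∖{0} → B be a map with finite range. Then ξ and its one-step adjustment ξ⁽¹⁾ have the same supports, where a support of a map η : A∖{0} → B is an element a ∈ A such that η(x) > 0 implies x ≤ a. -/
/-- A map `ξ : A∖{0} → B` with finite range has the same supports as its one-step
adjustment `ξ⁽¹⁾`, where `a` is a support of `η` if `η(x) > 0` implies `x ≤ a`. -/
theorem stmt16 {α β : Type*} [Lattice α] [OrderBot α] [Lattice β] [OrderBot β]
    (ξ ξ' : {a : α // a ≠ ⊥} → β) (hfin : (Set.range ξ).Finite)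
    (hadj : ∀ x : {a : α // a ≠ ⊥}, IsLUB (adjSet ξ x) (ξ' x)) :
    ∀ a : α, (∀ x : {a : α // a ≠ ⊥}, ⊥ < ξ x → x.1 ≤ a) ↔
      (∀ x : {a : α // a ≠ ⊥}, ⊥ < ξ' x → x.1 ≤ a) := by
  intro a
  constructor
  · intro h x hx
    have hnub : ¬ ⊥ ∈ upperBounds (adjSet ξ x) := fun hub =>
      absurd ((hadj x).2 hub) (not_le_of_gt hx)
    obtain ⟨c, hc, hcle⟩ : ∃ c ∈ adjSet ξ x, ¬ c ≤ ⊥ := by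
      simpa [upperBounds, not_forall] using hnub
    obtain ⟨S, hS, hsup, rfl⟩ := hc
    have hle : ∀ s ∈ S, s.1 ≤ a := fun s hs =>
      h s (lt_of_lt_of_le (bot_lt_iff_ne_bot.mpr fun hb => hcle (le_bot_iff.mpr hb))
        (Finset.inf'_le ξ hs))
    exact le_trans hsup (Finset.sup'_le hS _ hle)
  · intro h x hx
    have hmem : ξ x ∈ adjSet ξ x := ⟨{x}, Finset.singleton_nonempty x, by simp, by simp⟩
    exact h x (lt_of_lt_of_le hx ((hadj x).1 hmem))
end
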